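/- arXiv:2311.06374 — 6 statements merged into one kernel-verified Lean document; each statement's English description precedes it below -/
import Mathlib

section
/- If a univariate polynomial matrix M : ℝ → (n×n symmetric real matrices), each entry of degree at most d with d even, satisfies M(s) ⪰ 0 for all s ∈ [0,1], then ∫₀¹ M(s) ds ⪰ (1/(2(d²−1))) · M(0), where ⪰ denotes the Loewner (positive semidefinite) order. -/
/-!
Write `P k` for the shifted Legendre polynomials, normalized by `P k 0 = 1`. They are orthogonal
on `[0,1]` with `∫ (P k)² = 1/(2k+1)`, so `K_d = ∑_{k ≤ d} (2k+1) P k` reproduces the value at `0`: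
`∫ p K_d = p 0` whenever `deg p ≤ d`. Since `|P k| ≤ 1` on `[0,1]`, `K_d ≤ (d+1)²` there, and
a polynomial `p ≥ 0` on `[0,1]` satisfies `p 0 ≤ (d+1)² ∫ p ≤ 2(d²-1) ∫ p` once `d ≥ 3`; for
`d = 2` Simpson's rule gives `p 0 ≤ 6 ∫ p` directly. The matrix inequality is the scalar one
applied to the quadratic forms `s ↦ xᵀ M(s) x`.
-/

open Polynomial Set intervalIntegral Matrix
open scoped Nat

namespace Polynomial

variable {R : Type*} [CommRing R]

theorem eval_iterate_derivative_eq_zero_of_pow_dvd {p : R[X]} {a : R} {m i : ℕ}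
    (h : (X - C a) ^ m ∣ p) (hi : i < m) : (derivative^[i] p).eval a = 0 :=
  dvd_iff_isRoot.mp <| (dvd_pow_self _ (Nat.sub_ne_zero_of_lt hi)).trans
    (pow_sub_dvd_iterate_derivative_of_pow_dvd i h)

theorem iterate_derivative_eq_C_of_natDegree_le {p : R[X]} {k : ℕ} (hp : p.natDegree ≤ k) :
    derivative^[k] p = C (k ! * p.coeff k) := by
  rw [eq_C_of_natDegree_eq_zero (Nat.eq_zero_of_le_zero <|
    (natDegree_iterate_derivative p k).trans (Nat.sub_eq_zero_of_le hp).le),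
    coeff_iterate_derivative, zero_add, Nat.descFactorial_self, nsmul_eq_mul]

theorem X_sub_C_one_pow_dvd_one_sub_X_pow (k : ℕ) : (X - C (1 : R)) ^ k ∣ (1 - X) ^ k :=
  pow_dvd_pow_of_dvd ⟨-1, by rw [C_1]; ring⟩ k

theorem iterate_derivative_mul_derivative_of_linear {ℓ : R[X]}
    (hℓ : derivative (derivative ℓ) = 0) (f : R[X]) (m : ℕ) :
    derivative^[m] (ℓ * derivative f)
      = ℓ * derivative^[m + 1] f + m * (derivative ℓ * derivative^[m] f) := by
  induction m with
  | zero => simp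
  | succ m ih =>
    rw [Function.iterate_succ_apply', ih]
    simp only [derivative_add, derivative_mul, derivative_natCast, hℓ,
      ← Function.iterate_succ_apply' derivative]
    push_cast
    ring

theorem two_mul_iterate_derivative_mul_derivative_derivative_of_quadratic {q : R[X]}
    (hq : derivative (derivative (derivative q)) = 0) (f : R[X]) (m : ℕ) :
    2 * derivative^[m] (q * derivative (derivative f))
      = 2 * (q * derivative^[m + 2] f) + 2 * m * (derivative q * derivative^[m + 1] f)
        + m * (m - 1) * (derivative (derivative q) * derivative^[m] f) := by
  induction m with
  | zero => simp
  | succ m ih =>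
    have h2 : 2 * derivative^[m + 1] (q * derivative (derivative f))
        = derivative (2 * derivative^[m] (q * derivative (derivative f))) := by
      rw [Function.iterate_succ_apply', derivative_mul]; simp
    rw [h2, ih]
    simp only [derivative_add, derivative_mul, derivative_natCast, derivative_ofNat, hq,
      ← Function.iterate_succ_apply' derivative, derivative_sub, derivative_one]
    push_cast
    ring

theorem integral_eval_mul_iterate_derivative {a b : ℝ} (m : ℕ) {f g : ℝ[X]}
    (ha : (X - C a) ^ m ∣ f ∨ (X - C a) ^ m ∣ g) (hb : (X - C b) ^ m ∣ f ∨ (X - C b) ^ m ∣ g) :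
    ∫ s in a..b, f.eval s * (derivative^[m] g).eval s
      = (-1) ^ m * ∫ s in a..b, (derivative^[m] f).eval s * g.eval s := by
  induction m generalizing f with
  | zero => simp
  | succ m ih =>
    have boundary : ∀ c, (X - C c) ^ (m + 1) ∣ f ∨ (X - C c) ^ (m + 1) ∣ g →
        f.eval c * (derivative^[m] g).eval c = 0 := by
      rintro c (hf | hg)
      · rw [show f.eval c = 0 from eval_iterate_derivative_eq_zero_of_pow_dvd hf m.succ_pos,
          zero_mul]
      · rw [eval_iterate_derivative_eq_zero_of_pow_dvd hg m.lt_succ_self, mul_zero]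
    have lower : ∀ c, (X - C c) ^ (m + 1) ∣ f ∨ (X - C c) ^ (m + 1) ∣ g →
        (X - C c) ^ m ∣ derivative f ∨ (X - C c) ^ m ∣ g := by
      rintro c (hf | hg)
      · exact .inl (by simpa using pow_sub_dvd_iterate_derivative_of_pow_dvd 1 hf)
      · exact .inr ((pow_dvd_pow _ m.le_succ).trans hg)
    rw [Function.iterate_succ_apply', integral_mul_deriv_eq_deriv_mul
      (fun x _ => f.hasDerivAt x) (fun x _ => (derivative^[m] g).hasDerivAt x)
      ((Polynomial.continuous _).intervalIntegrable _ _)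
      ((Polynomial.continuous _).intervalIntegrable _ _),
      boundary a ha, boundary b hb, ih (lower a ha) (lower b hb), Function.iterate_succ_apply]
    ring

end Polynomial

theorem integral_pow_mul_one_sub_pow_self (k : ℕ) :
    ∫ s in (0 : ℝ)..1, s ^ k * (1 - s) ^ k = (k ! : ℝ) ^ 2 / (2 * k + 1)! := by
  have ibp := integral_eval_mul_iterate_derivative (a := 0) (b := 1) k
    (f := (1 - X) ^ k) (g := X ^ (2 * k))
    (.inr (by simpa using pow_dvd_pow X (by omega : k ≤ 2 * k)))
    (.inl (X_sub_C_one_pow_dvd_one_sub_X_pow k))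
  have hD : derivative^[k] ((1 - X : ℝ[X]) ^ k) = C ((-1) ^ k * (k ! : ℝ)) := by
    rw [show ((1 - X : ℝ[X]) ^ k) = (X ^ k).comp (1 - X) by simp,
      iterate_derivative_comp_one_sub_X, iterate_derivative_X_pow_eq_C_mul]
    simp [Nat.descFactorial_self]
  have hlhs : ∫ s in (0 : ℝ)..1, (1 - s) ^ k * (((2 * k).descFactorial k : ℝ) * s ^ k)
      = (2 * k).descFactorial k * ∫ s in (0 : ℝ)..1, s ^ k * (1 - s) ^ k := by
    rw [← integral_const_mul]; congr 1; ext; ring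
  simp only [iterate_derivative_X_pow_eq_C_mul, hD, eval_mul, eval_pow, eval_sub, eval_one,
    eval_X, eval_C, show 2 * k - k = k by omega, hlhs, integral_const_mul, integral_pow] at ibp
  have hdesc : ((2 * k).descFactorial k : ℝ) ≠ 0 := by
    exact_mod_cast (Nat.descFactorial_pos.mpr (by omega)).ne'
  rw [Nat.factorial_succ, ← Nat.factorial_mul_descFactorial (by omega : k ≤ 2 * k),
    show 2 * k - k = k by omega]
  push_cast
  rw [eq_div_iff (mul_ne_zero (by positivity) (mul_ne_zero (by positivity) hdesc))]
  field_simp at ibp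
  rw [← pow_mul, mul_comm k, pow_mul, neg_one_sq, one_pow, one_pow,
    zero_pow (by omega : 2 * k + 1 ≠ 0)] at ibp
  push_cast at ibp
  linear_combination (k ! : ℝ) * ibp

noncomputable def shiftedLegendreReal (k : ℕ) : ℝ[X] :=
  (shiftedLegendre k).map (Int.castRingHom ℝ)

theorem shiftedLegendreReal_eval_eq_aeval (k : ℕ) (s : ℝ) :
    (shiftedLegendreReal k).eval s = aeval s (shiftedLegendre k) := by
  rw [← eval_map_algebraMap, algebraMap_int_eq, shiftedLegendreReal]

theorem degree_shiftedLegendreReal (k : ℕ) : (shiftedLegendreReal k).degree = k := by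
  rw [shiftedLegendreReal, degree_map_eq_of_injective (RingHom.injective_int _),
    degree_shiftedLegendre]

@[simp]
theorem natDegree_shiftedLegendreReal (k : ℕ) : (shiftedLegendreReal k).natDegree = k :=
  natDegree_eq_of_degree_eq_some (degree_shiftedLegendreReal k)

theorem coeff_shiftedLegendreReal_self (k : ℕ) :
    (shiftedLegendreReal k).coeff k = (-1) ^ k * ((2 * k).choose k : ℝ) := by
  simp [shiftedLegendreReal, coeff_shiftedLegendre, two_mul]

@[simp]
theorem shiftedLegendreReal_zero : shiftedLegendreReal 0 = 1 := by
  simp [shiftedLegendreReal, shiftedLegendre]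

@[simp]
theorem shiftedLegendreReal_eval_zero (k : ℕ) : (shiftedLegendreReal k).eval 0 = 1 := by
  simp [← coeff_zero_eq_eval_zero, shiftedLegendreReal, coeff_shiftedLegendre]

theorem shiftedLegendreReal_eval_one (k : ℕ) : (shiftedLegendreReal k).eval 1 = (-1) ^ k := by
  rw [shiftedLegendreReal_eval_eq_aeval, shiftedLegendre_eval_symm, sub_self,
    ← shiftedLegendreReal_eval_eq_aeval, shiftedLegendreReal_eval_zero, mul_one]

theorem factorial_mul_shiftedLegendreReal (k : ℕ) :
    (k ! : ℝ[X]) * shiftedLegendreReal k = derivative^[k] (X ^ k * (1 - X) ^ k) := by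
  simpa [← iterate_derivative_map, shiftedLegendreReal] using
    congrArg (map (Int.castRingHom ℝ)) (factorial_mul_shiftedLegendre_eq k)

theorem integral_eval_mul_shiftedLegendreReal (k : ℕ) (f : ℝ[X]) :
    ∫ s in (0 : ℝ)..1, f.eval s * (shiftedLegendreReal k).eval s
      = (-1) ^ k / k ! * ∫ s in (0 : ℝ)..1, (derivative^[k] f).eval s * (s ^ k * (1 - s) ^ k) := by
  have ibp := integral_eval_mul_iterate_derivative (a := 0) (b := 1) k
    (f := f) (g := X ^ k * (1 - X) ^ k) (.inr (by simp [dvd_mul_right]))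
    (.inr (dvd_mul_of_dvd_right (X_sub_C_one_pow_dvd_one_sub_X_pow k) _))
  simp only [← factorial_mul_shiftedLegendreReal, eval_mul, eval_natCast, eval_pow, eval_sub,
    eval_one, eval_X, mul_left_comm _ (k ! : ℝ), integral_const_mul] at ibp
  rw [div_mul_eq_mul_div, eq_div_iff (by positivity), mul_comm, ibp]

theorem integral_eval_mul_shiftedLegendreReal_eq_zero {f : ℝ[X]} {k : ℕ}
    (hf : f.natDegree < k) :
    ∫ s in (0 : ℝ)..1, f.eval s * (shiftedLegendreReal k).eval s = 0 := by
  simp [integral_eval_mul_shiftedLegendreReal, iterate_derivative_eq_zero hf]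

theorem integral_shiftedLegendreReal_mul_eq_zero {j k : ℕ} (hjk : j ≠ k) :
    ∫ s in (0 : ℝ)..1, (shiftedLegendreReal j).eval s * (shiftedLegendreReal k).eval s = 0 := by
  rcases hjk.lt_or_gt with h | h
  · exact integral_eval_mul_shiftedLegendreReal_eq_zero (by simpa using h)
  · simp_rw [mul_comm ((shiftedLegendreReal j).eval _)]
    exact integral_eval_mul_shiftedLegendreReal_eq_zero (by simpa using h)

theorem integral_shiftedLegendreReal_mul_self (k : ℕ) :
    ∫ s in (0 : ℝ)..1, (shiftedLegendreReal k).eval s * (shiftedLegendreReal k).eval s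
      = 1 / (2 * k + 1) := by
  rw [integral_eval_mul_shiftedLegendreReal,
    iterate_derivative_eq_C_of_natDegree_le (natDegree_shiftedLegendreReal k).le,
    coeff_shiftedLegendreReal_self]
  simp only [eval_C, integral_const_mul, integral_pow_mul_one_sub_pow_self]
  have hchoose := Nat.choose_mul_factorial_mul_factorial (by omega : k ≤ 2 * k)
  rw [show 2 * k - k = k by omega] at hchoose
  have hc : ((2 * k).choose k : ℝ) ≠ 0 := by exact_mod_cast (Nat.choose_pos (by omega)).ne'
  rw [Nat.factorial_succ, ← hchoose]
  push_cast
  field_simp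
  rw [← pow_mul, mul_comm, pow_mul, neg_one_sq, one_pow]

def SolvesShiftedLegendreODE (c : ℝ) (u : ℝ[X]) : Prop :=
  X * (1 - X) * derivative (derivative u) + (1 - 2 * X) * derivative u + C c * u = 0

theorem solvesShiftedLegendreODE_iterate_derivative_pow (k : ℕ) :
    SolvesShiftedLegendreODE (k * (k + 1)) (derivative^[k] ((X * (1 - X)) ^ k)) := by
  set q : ℝ[X] := X * (1 - X)
  set w := q ^ k
  have hq1 : derivative q = 1 - 2 * X := by
    simp only [q, derivative_mul, derivative_X, derivative_sub, derivative_one]; ring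
  have hq2 : derivative (derivative q) = -2 := by rw [hq1]; simp
  have hq3 : derivative (derivative (derivative q)) = 0 := by rw [hq2]; simp
  have hw : q * derivative w = k * (derivative q * w) := by
    cases k with
    | zero => simp [w]
    | succ k =>
      simp only [w]; rw [derivative_pow, Nat.add_sub_cancel, C_eq_natCast, pow_succ]; ring
  have hw' : q * derivative (derivative w) + derivative q * derivative w
      = k * (derivative q * derivative w) + k * (derivative (derivative q) * w) := by
    simpa [derivative_mul, mul_add, add_comm] using congrArg derivative hw
  have hconst : derivative^[k] (derivative (derivative q) * w)
      = derivative (derivative q) * derivative^[k] w := by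
    rw [hq2, show (-2 : ℝ[X]) = C (-2) by rw [map_neg, C_ofNat], iterate_derivative_C_mul]
  have := congrArg (fun p => 2 * derivative^[k] p) hw'
  simp only [iterate_map_add, iterate_derivative_natCast_mul, mul_add, hconst,
    two_mul_iterate_derivative_mul_derivative_derivative_of_quadratic hq3,
    iterate_derivative_mul_derivative_of_linear hq3] at this
  rw [hq2, hq1] at this
  simp only [Function.iterate_succ_apply'] at this
  unfold SolvesShiftedLegendreODE
  apply mul_left_cancel₀ (two_ne_zero' ℝ[X])
  simp only [map_mul, map_add, map_one, map_natCast]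
  linear_combination this

theorem SolvesShiftedLegendreODE.of_C_mul {c a : ℝ} {u : ℝ[X]} (ha : a ≠ 0)
    (h : SolvesShiftedLegendreODE c (C a * u)) : SolvesShiftedLegendreODE c u := by
  unfold SolvesShiftedLegendreODE at h ⊢
  apply mul_left_cancel₀ (C_ne_zero.mpr ha)
  rw [mul_zero, ← h]
  simp only [derivative_C_mul]
  ring

theorem solvesShiftedLegendreODE_shiftedLegendreReal (k : ℕ) :
    SolvesShiftedLegendreODE (k * (k + 1)) (shiftedLegendreReal k) := by
  refine .of_C_mul (by positivity : (k ! : ℝ) ≠ 0) ?_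
  rw [C_eq_natCast, factorial_mul_shiftedLegendreReal, ← mul_pow]
  exact solvesShiftedLegendreODE_iterate_derivative_pow k

theorem SolvesShiftedLegendreODE.sq_eval_le_max {c : ℝ} {u : ℝ[X]}
    (hu : SolvesShiftedLegendreODE c u) (hc : 0 < c) {s : ℝ} (hs : s ∈ Icc 0 1) :
    u.eval s ^ 2 ≤ max (u.eval 0 ^ 2) (u.eval 1 ^ 2) := by
  -- Sonin-type energy: it dominates `c u²` on `[0,1]`, agrees with it at `0` and `1`, and
  -- attains its maximum over `[0,1]` at an endpoint.
  unfold SolvesShiftedLegendreODE at hu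
  set V := C c * u ^ 2 + X * (1 - X) * derivative u ^ 2
  have hV : derivative V = (2 * X - 1) * derivative u ^ 2 := by
    simp only [V, derivative_add, derivative_mul, derivative_C, derivative_sq, derivative_X,
      derivative_sub, derivative_one, C_ofNat]
    linear_combination (2 * derivative u) * hu
  have hderiv (x : ℝ) : deriv (fun x => V.eval x) x = (2 * x - 1) * (derivative u).eval x ^ 2 := by
    simp [Polynomial.deriv, hV]
  have hVs : c * u.eval s ^ 2 ≤ V.eval s := by
    have : 0 ≤ s * (1 - s) * (derivative u).eval s ^ 2 :=
      mul_nonneg (mul_nonneg hs.1 (by linarith [hs.2])) (sq_nonneg _)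
    simp only [V, eval_add, eval_mul, eval_C, eval_pow, eval_sub, eval_X, eval_one]
    linarith
  suffices V.eval s ≤ c * max (u.eval 0 ^ 2) (u.eval 1 ^ 2) from
    le_of_mul_le_mul_left (hVs.trans this) hc
  rcases le_total s (1 / 2) with hs' | hs'
  · have hanti : AntitoneOn (fun x => V.eval x) (Icc 0 (1 / 2)) :=
      antitoneOn_of_deriv_nonpos (convex_Icc _ _) V.continuousOn V.differentiableOn fun x hx => by
        rw [interior_Icc] at hx
        rw [hderiv]
        exact mul_nonpos_of_nonpos_of_nonneg (by linarith [hx.2]) (sq_nonneg _)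
    calc V.eval s ≤ V.eval 0 := hanti ⟨le_rfl, by norm_num⟩ ⟨hs.1, hs'⟩ hs.1
      _ ≤ _ := by simpa [V] using mul_le_mul_of_nonneg_left (le_max_left _ _) hc.le
  · have hmono : MonotoneOn (fun x => V.eval x) (Icc (1 / 2) 1) :=
      monotoneOn_of_deriv_nonneg (convex_Icc _ _) V.continuousOn V.differentiableOn fun x hx => by
        rw [interior_Icc] at hx
        rw [hderiv]
        exact mul_nonneg (by linarith [hx.1]) (sq_nonneg _)
    calc V.eval s ≤ V.eval 1 := hmono ⟨hs', hs.2⟩ ⟨by norm_num, le_rfl⟩ hs.2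
      _ ≤ _ := by simpa [V] using mul_le_mul_of_nonneg_left (le_max_right _ _) hc.le

theorem abs_eval_shiftedLegendreReal_le_one (k : ℕ) {s : ℝ} (hs : s ∈ Icc 0 1) :
    |(shiftedLegendreReal k).eval s| ≤ 1 := by
  rcases Nat.eq_zero_or_pos k with rfl | hk
  · simp
  have := (solvesShiftedLegendreODE_shiftedLegendreReal k).sq_eval_le_max (by positivity) hs
  rw [shiftedLegendreReal_eval_zero, shiftedLegendreReal_eval_one, ← pow_mul, mul_comm,
    pow_mul, neg_one_sq, one_pow, one_pow, max_self] at this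
  exact abs_le_one_iff_mul_self_le_one.mpr (by nlinarith)

-- `K_d(s) = ∑ P k 0 * P k s / ∫ (P k)²`, the reproducing kernel of evaluation at `0` on
-- polynomials of degree `≤ d` with the `L²[0,1]` inner product.
noncomputable def reproducingKernelAtZero (d : ℕ) : ℝ[X] :=
  ∑ k ∈ Finset.range (d + 1), C (2 * k + 1 : ℝ) * shiftedLegendreReal k

theorem integral_shiftedLegendreReal_mul_reproducingKernelAtZero {j d : ℕ} (hj : j ≤ d) :
    ∫ s in (0 : ℝ)..1, (shiftedLegendreReal j).eval s * (reproducingKernelAtZero d).eval s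
      = 1 := by
  simp only [reproducingKernelAtZero, eval_finsetSum, eval_mul, eval_C, Finset.mul_sum,
    mul_left_comm ((shiftedLegendreReal j).eval _)]
  rw [integral_finsetSum fun k _ => (by fun_prop : Continuous _).intervalIntegrable _ _,
    Finset.sum_eq_single_of_mem j (Finset.mem_range.mpr (by omega))]
  · rw [integral_const_mul, integral_shiftedLegendreReal_mul_self]
    field_simp
  · intro k _ hkj
    rw [integral_const_mul, integral_shiftedLegendreReal_mul_eq_zero (Ne.symm hkj), mul_zero]

theorem integral_eval_mul_reproducingKernelAtZero {p : ℝ[X]} {d : ℕ} (hp : p.natDegree ≤ d) :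
    ∫ s in (0 : ℝ)..1, p.eval s * (reproducingKernelAtZero d).eval s = p.eval 0 := by
  let S : Sequence ℝ := ⟨shiftedLegendreReal, degree_shiftedLegendreReal⟩
  have hspan : p ∈ Submodule.span ℝ (S '' Iic d) := by
    rw [S.span_degreeLE fun i _ => isUnit_iff_ne_zero.mpr (leadingCoeff_ne_zero.mpr
      (S.ne_zero i)), mem_degreeLE]
    exact degree_le_of_natDegree_le hp
  clear hp
  induction hspan using Submodule.span_induction with
  | mem q hq =>
    obtain ⟨j, hj, rfl⟩ := hq
    exact (integral_shiftedLegendreReal_mul_reproducingKernelAtZero hj).trans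
      (shiftedLegendreReal_eval_zero j).symm
  | zero => simp
  | add q r _ _ hq hr =>
    simp only [eval_add, add_mul]
    rw [integral_add ((by fun_prop : Continuous _).intervalIntegrable _ _)
      ((by fun_prop : Continuous _).intervalIntegrable _ _), hq, hr]
  | smul a q _ hq => simp [mul_assoc, integral_const_mul, hq]

theorem sum_range_two_mul_add_one (n : ℕ) : ∑ k ∈ Finset.range n, (2 * k + 1 : ℝ) = n ^ 2 := by
  induction n with
  | zero => simp
  | succ n ih => rw [Finset.sum_range_succ, ih]; push_cast; ring

theorem eval_reproducingKernelAtZero_le (d : ℕ) {s : ℝ} (hs : s ∈ Icc 0 1) :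
    (reproducingKernelAtZero d).eval s ≤ (d + 1) ^ 2 := by
  simp only [reproducingKernelAtZero, eval_finsetSum, eval_mul, eval_C]
  calc ∑ k ∈ Finset.range (d + 1), (2 * k + 1 : ℝ) * (shiftedLegendreReal k).eval s
      ≤ ∑ k ∈ Finset.range (d + 1), (2 * k + 1 : ℝ) :=
        Finset.sum_le_sum fun k _ => mul_le_of_le_one_right (by positivity)
          ((le_abs_self _).trans (abs_eval_shiftedLegendreReal_le_one k hs))
    _ = (d + 1) ^ 2 := by rw [sum_range_two_mul_add_one]; push_cast; ring

theorem eval_zero_le_sq_mul_integral {p : ℝ[X]} {d : ℕ} (hp : p.natDegree ≤ d)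
    (hpos : ∀ s ∈ Icc (0 : ℝ) 1, 0 ≤ p.eval s) :
    p.eval 0 ≤ (d + 1) ^ 2 * ∫ s in (0 : ℝ)..1, p.eval s := by
  calc p.eval 0 = ∫ s in (0 : ℝ)..1, p.eval s * (reproducingKernelAtZero d).eval s :=
        (integral_eval_mul_reproducingKernelAtZero hp).symm
    _ ≤ ∫ s in (0 : ℝ)..1, p.eval s * (d + 1) ^ 2 :=
        integral_mono_on zero_le_one ((by fun_prop : Continuous _).intervalIntegrable _ _)
          ((by fun_prop : Continuous _).intervalIntegrable _ _) fun s hs =>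
          mul_le_mul_of_nonneg_left (eval_reproducingKernelAtZero_le d hs) (hpos s hs)
    _ = (d + 1) ^ 2 * ∫ s in (0 : ℝ)..1, p.eval s := by rw [integral_mul_const, mul_comm]

theorem integral_eval_eq_simpson {p : ℝ[X]} (hp : p.natDegree ≤ 3) :
    ∫ s in (0 : ℝ)..1, p.eval s = (p.eval 0 + 4 * p.eval (1 / 2) + p.eval 1) / 6 := by
  simp only [eval_eq_sum_range' (p := p) (n := 4) (by omega)]
  rw [integral_finsetSum fun i _ => (by fun_prop : Continuous _).intervalIntegrable _ _]
  simp [Finset.sum_range_succ, integral_const_mul]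
  ring

theorem eval_zero_le_six_mul_integral {p : ℝ[X]} (hp : p.natDegree ≤ 3)
    (hpos : ∀ s ∈ Icc (0 : ℝ) 1, 0 ≤ p.eval s) :
    p.eval 0 ≤ 6 * ∫ s in (0 : ℝ)..1, p.eval s := by
  rw [integral_eval_eq_simpson hp]
  linarith [hpos (1 / 2) ⟨by norm_num, by norm_num⟩, hpos 1 ⟨zero_le_one, le_rfl⟩]

theorem eval_zero_le_mul_integral {p : ℝ[X]} {d : ℕ} (hd : 2 ≤ d) (hp : p.natDegree ≤ d)
    (hpos : ∀ s ∈ Icc (0 : ℝ) 1, 0 ≤ p.eval s) :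
    p.eval 0 ≤ 2 * ((d : ℝ) ^ 2 - 1) * ∫ s in (0 : ℝ)..1, p.eval s := by
  rcases hd.eq_or_lt with rfl | hd
  · norm_num
    exact eval_zero_le_six_mul_integral (by omega) hpos
  · have hint : 0 ≤ ∫ s in (0 : ℝ)..1, p.eval s := integral_nonneg zero_le_one hpos
    have hd' : (3 : ℝ) ≤ d := by exact_mod_cast hd
    have hconst : ((d : ℝ) + 1) ^ 2 ≤ 2 * ((d : ℝ) ^ 2 - 1) := by nlinarith
    linarith [eval_zero_le_sq_mul_integral hp hpos, mul_le_mul_of_nonneg_right hconst hint]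

theorem posSemidef_integral_sub_smul_eval_zero {ι : Type*} [Fintype ι] {d : ℕ} {c : ℝ}
    (hc : ∀ p : ℝ[X], p.natDegree ≤ d → (∀ s ∈ Icc (0 : ℝ) 1, 0 ≤ p.eval s) →
      c * p.eval 0 ≤ ∫ s in (0 : ℝ)..1, p.eval s)
    (M : Matrix ι ι ℝ[X]) (hdeg : ∀ i j, (M i j).natDegree ≤ d)
    (hpsd : ∀ s ∈ Icc (0 : ℝ) 1, (M.map (eval s)).PosSemidef) :
    ((of fun i j => ∫ s in (0 : ℝ)..1, (M i j).eval s) - c • M.map (eval 0)).PosSemidef := by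
  have hsymm (i j : ι) : M j i = M i j :=
    eq_of_infinite_eval_eq _ _ <| (Icc_infinite zero_lt_one).mono fun s hs =>
      congrFun₂ (hpsd s hs).1 i j
  refine posSemidef_iff_dotProduct_mulVec.mpr ⟨?_, fun x => ?_⟩
  · ext i j
    simp [hsymm i j]
  set q : ℝ[X] := ∑ i, C (x i) * ∑ j, M i j * C (x j)
  have heval (s : ℝ) : q.eval s = star x ⬝ᵥ M.map (eval s) *ᵥ x := by
    simp [q, eval_finsetSum, dotProduct, mulVec]
  have hint : ∫ s in (0 : ℝ)..1, q.eval s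
      = star x ⬝ᵥ (of fun i j => ∫ s in (0 : ℝ)..1, (M i j).eval s) *ᵥ x := by
    simp only [q, eval_finsetSum, eval_mul, eval_C, dotProduct, mulVec, of_apply, star_trivial]
    rw [integral_finsetSum fun i _ => (by fun_prop : Continuous _).intervalIntegrable _ _]
    refine Finset.sum_congr rfl fun i _ => ?_
    rw [integral_const_mul,
      integral_finsetSum fun i _ => (by fun_prop : Continuous _).intervalIntegrable _ _]
    simp only [integral_mul_const]
  have hq := hc q (natDegree_sum_le_of_forall_le _ _ fun i _ => (natDegree_C_mul_le _ _).trans <|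
    natDegree_sum_le_of_forall_le _ _ fun j _ => (natDegree_mul_C_le _ _).trans (hdeg i j))
    fun s hs => heval s ▸ (hpsd s hs).dotProduct_mulVec_nonneg x
  rw [sub_mulVec, dotProduct_sub, smul_mulVec, dotProduct_smul, ← hint, ← heval, smul_eq_mul]
  linarith

theorem stmt0_general (n d : ℕ) (hd : 2 ≤ d)
    (M : Matrix (Fin n) (Fin n) (Polynomial ℝ))
    (hdeg : ∀ i j, (M i j).natDegree ≤ d)
    (hpsd : ∀ s ∈ Set.Icc (0:ℝ) 1, (M.map (Polynomial.eval s)).PosSemidef) :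
    ((Matrix.of fun i j => ∫ s in (0:ℝ)..1, (M i j).eval s)
      - (1 / (2 * ((d:ℝ)^2 - 1))) • M.map (Polynomial.eval 0)).PosSemidef := by
  have hpos : (0 : ℝ) < 2 * ((d : ℝ) ^ 2 - 1) := by
    have : (2 : ℝ) ≤ d := by exact_mod_cast hd
    nlinarith
  refine posSemidef_integral_sub_smul_eval_zero (fun p hp hnonneg => ?_) M hdeg hpsd
  rw [one_div_mul_eq_div, div_le_iff₀ hpos, mul_comm]
  exact eval_zero_le_mul_integral hd hp hnonneg

/-- If a univariate polynomial matrix `M`, each entry of degree at most `d` with `d` even,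
is positive semidefinite on `[0,1]`, then `∫₀¹ M(s) ds ⪰ (1/(2(d²−1))) M(0)` in the
Loewner order. -/
theorem stmt0 (n d : ℕ) (hd_even : Even d) (hd : 2 ≤ d)
    (M : Matrix (Fin n) (Fin n) (Polynomial ℝ))
    (hdeg : ∀ i j, (M i j).natDegree ≤ d)
    (hpsd : ∀ s ∈ Set.Icc (0:ℝ) 1, (M.map (Polynomial.eval s)).PosSemidef) :
    ((Matrix.of fun i j => ∫ s in (0:ℝ)..1, (M i j).eval s)
      - (1 / (2 * ((d:ℝ)^2 - 1))) • M.map (Polynomial.eval 0)).PosSemidef :=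
  stmt0_general n d hd M hdeg hpsd
end

section
/- If a convex polynomial p : ℝⁿ → ℝ has positive definite Hessian at some point x₀ ∈ ℝⁿ, then p has a unique global minimizer. -/
/-!
Along a line `t ↦ x + t • v` with `v ≠ 0`, a convex polynomial restricts to a convex univariate
polynomial whose second derivative at `0` is `vᵀ ∇²p(x) v`. At `x₀` this is positive, so the
restriction has degree at least two, and a convex univariate polynomial of degree at least two
tends to `+∞`: `p` is coercive along every ray from `x₀`. A closed unbounded convex set contains a
ray from each of its points, so the sublevel set `{p ≤ p x₀}` is bounded and compactness gives a
minimizer. Two distinct minimizers would make `p` constant on the segment joining them, hence, `p`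
being a polynomial, on the whole line; by convexity `p` would then not tend to `+∞` along the
parallel ray from `x₀` either.
-/

open MvPolynomial Set Filter Bornology
open scoped Matrix

theorem Polynomial.tendsto_atTop_of_convexOn {q : Polynomial ℝ}
    (hq : ConvexOn ℝ univ (q.eval ·)) (hdeg : 1 < q.degree) : Tendsto (q.eval ·) atTop atTop := by
  refine q.tendsto_atTop_of_leadingCoeff_nonneg (zero_lt_one.trans hdeg) ?_
  -- On `[1, ∞)` the convex `q` lies above its chord over `[0, 1]`, so `q - chord` cannot tend
  -- to `-∞`.
  set chord : Polynomial ℝ := .C (q.eval 1 - q.eval 0) * .X + .C (q.eval 0)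
  have hchord : chord.degree < q.degree := Polynomial.degree_linear_le.trans_lt hdeg
  have hq_ge_chord : ∀ t ≥ (1 : ℝ), 0 ≤ (q - chord).eval t := by
    intro t ht
    have hslope := hq.slope_mono (mem_univ 0) (by simp) ⟨mem_univ t, (by linarith : t ≠ 0)⟩ ht
    simp only [slope_def_field, sub_zero, div_one] at hslope
    rw [le_div_iff₀ (by linarith)] at hslope
    simp only [chord, Polynomial.eval_sub, Polynomial.eval_add, Polynomial.eval_mul,
      Polynomial.eval_C, Polynomial.eval_X]
    linarith
  by_contra! hlc
  have hbot := (q - chord).tendsto_atBot_of_leadingCoeff_nonpos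
    (by rw [Polynomial.degree_sub_eq_left_of_degree_lt hchord]; exact zero_lt_one.trans hdeg)
    (by rw [Polynomial.leadingCoeff_sub_of_degree_lt hchord]; exact hlc.le)
  obtain ⟨t, ht, hneg⟩ := ((eventually_ge_atTop 1).and (hbot.eventually_lt_atBot 0)).exists
  exact (hq_ge_chord t ht).not_gt hneg

section Convex

variable {E : Type*}

theorem ConvexOn.comp_add_smul [AddCommGroup E] [Module ℝ E] {f : E → ℝ}
    (hf : ConvexOn ℝ univ f) (x v : E) : ConvexOn ℝ univ fun t : ℝ => f (x + t • v) := by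
  simpa [Function.comp_def, AffineMap.lineMap_apply, add_comm] using
    hf.comp_affineMap (AffineMap.lineMap x (x + v))

theorem ConvexOn.tendsto_atTop_add_smul_of_tendsto_atTop_add_smul [AddCommGroup E] [Module ℝ E]
    {f : E → ℝ} (hf : ConvexOn ℝ univ f) {x v : E}
    (hx : Tendsto (fun t : ℝ => f (x + t • v)) atTop atTop) (a : E) :
    Tendsto (fun t : ℝ => f (a + t • v)) atTop atTop := by
  have hmid : ∀ t : ℝ, 2 * f (x + t • v) - f (2 • x - a) ≤ f (a + (2 * t) • v) := by
    intro t
    have h := hf.2 (mem_univ (a + (2 * t) • v)) (mem_univ (2 • x - a))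
      (by norm_num : (0 : ℝ) ≤ 1 / 2) (by norm_num : (0 : ℝ) ≤ 1 / 2) (by norm_num)
    have hpt : (1 / 2 : ℝ) • (a + (2 * t) • v) + (1 / 2 : ℝ) • (2 • x - a) = x + t • v := by
      module
    rw [hpt, smul_eq_mul, smul_eq_mul] at h
    linarith
  have hdouble : Tendsto (fun t : ℝ => f (a + (2 * t) • v)) atTop atTop :=
    tendsto_atTop_mono hmid (tendsto_atTop_add_const_right _ _ (hx.const_mul_atTop two_pos))
  refine (hdouble.comp (tendsto_id.atTop_div_const two_pos)).congr fun t => ?_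
  simp only [Function.comp_apply, id, mul_div_cancel₀ t two_ne_zero]

theorem ConvexOn.apply_add_smul_sub_eq_of_forall_le [AddCommGroup E] [Module ℝ E] {f : E → ℝ}
    (hf : ConvexOn ℝ univ f) {a b : E} (ha : ∀ y, f a ≤ f y) (hb : ∀ y, f b ≤ f y) {t : ℝ}
    (ht : t ∈ Icc 0 1) : f (a + t • (b - a)) = f a :=
  le_antisymm
    ((hf.convex_le (f a)).add_smul_sub_mem ⟨mem_univ a, le_rfl⟩ ⟨mem_univ b, hb a⟩ ht).2 (ha _)

theorem StarConvex.add_smul_mem_of_le [AddCommGroup E] [Module ℝ E] {S : Set E} {x v : E}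
    (hS : StarConvex ℝ x S) {s t : ℝ} (hs : 0 ≤ s) (hst : s ≤ t) (ht : x + t • v ∈ S) :
    x + s • v ∈ S := by
  have h := hS.add_smul_mem ht (div_nonneg hs (hs.trans hst)) (div_le_one_of_le₀ hst (hs.trans hst))
  rwa [smul_smul, div_mul_cancel_of_imp fun ht0 => le_antisymm (ht0 ▸ hst) hs] at h

variable [NormedAddCommGroup E] [NormedSpace ℝ E] [ProperSpace E]

theorem Convex.exists_ray_subset_of_not_isBounded {S : Set E} {x : E} (hS : Convex ℝ S)
    (hS_closed : IsClosed S) (hx : x ∈ S) (hS_unbdd : ¬IsBounded S) :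
    ∃ v ≠ 0, ∀ t : ℝ, 0 ≤ t → x + t • v ∈ S := by
  have hstar := hS.starConvex hx
  let K : ℕ → Set E := fun m => Metric.sphere 0 1 ∩ {v | x + (m : ℝ) • v ∈ S}
  have hK_closed : ∀ m, IsClosed (K m) := fun m =>
    Metric.isClosed_sphere.inter (hS_closed.preimage (by fun_prop))
  have hK_anti : ∀ m, K (m + 1) ⊆ K m := fun m v hv =>
    ⟨hv.1, hstar.add_smul_mem_of_le m.cast_nonneg (by push_cast; linarith) hv.2⟩
  have hK_nonempty : ∀ m, (K m).Nonempty := by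
    intro m
    obtain ⟨y, hyS, hy⟩ : ∃ y ∈ S, (m : ℝ) < ‖y - x‖ := by
      by_contra! h
      exact hS_unbdd ((Metric.isBounded_closedBall (x := x) (r := m)).subset
        fun y hy => by simpa [dist_eq_norm] using h y hy)
    have hy0 : ‖y - x‖ ≠ 0 := (m.cast_nonneg.trans_lt hy).ne'
    refine ⟨‖y - x‖⁻¹ • (y - x), by simp [norm_smul, hy0], hstar.add_smul_mem_of_le
      m.cast_nonneg hy.le ?_⟩
    rwa [smul_smul, mul_inv_cancel₀ hy0, one_smul, add_sub_cancel]
  obtain ⟨v, hv⟩ := IsCompact.nonempty_iInter_of_sequence_nonempty_isCompact_isClosed K hK_anti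
    hK_nonempty ((isCompact_sphere 0 1).of_isClosed_subset (hK_closed 0) inter_subset_left)
    hK_closed
  rw [mem_iInter] at hv
  refine ⟨v, ne_zero_of_mem_unit_sphere ⟨v, (hv 0).1⟩, fun t ht => ?_⟩
  exact hstar.add_smul_mem_of_le ht (Nat.le_ceil t) (hv ⌈t⌉₊).2

theorem ConvexOn.exists_forall_le_of_tendsto_atTop_add_smul {f : E → ℝ} (hf : ConvexOn ℝ univ f)
    (hf_cont : Continuous f) (x₀ : E)
    (hray : ∀ v ≠ 0, Tendsto (fun t : ℝ => f (x₀ + t • v)) atTop atTop) :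
    ∃ x, ∀ y, f x ≤ f y := by
  set S := {x | f x ≤ f x₀}
  have hS_closed : IsClosed S := isClosed_le hf_cont continuous_const
  have hx₀S : x₀ ∈ S := le_refl (f x₀)
  have hS_bdd : IsBounded S := by
    by_contra hS_unbdd
    obtain ⟨v, hv, hvS⟩ := (by simpa using hf.convex_le (f x₀) : Convex ℝ S)
      |>.exists_ray_subset_of_not_isBounded hS_closed hx₀S hS_unbdd
    obtain ⟨t, ht, hlt⟩ := ((eventually_ge_atTop 0).and ((hray v hv).eventually_gt_atTop _)).exists
    exact (hvS t ht).not_gt hlt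
  obtain ⟨x, hxS, hx⟩ := (Metric.isCompact_of_isClosed_isBounded hS_closed hS_bdd).exists_isMinOn
    ⟨x₀, hx₀S⟩ hf_cont.continuousOn
  refine ⟨x, fun y => ?_⟩
  by_cases hy : y ∈ S
  · exact hx hy
  · exact (hx hx₀S).trans (not_le.1 hy).le

end Convex

namespace MvPolynomial

variable {σ R : Type*} [CommRing R]

noncomputable def restrictToLine (x v : σ → R) (p : MvPolynomial σ R) : Polynomial R :=
  aeval (fun i => Polynomial.C (x i) + Polynomial.C (v i) * Polynomial.X) p

theorem eval_restrictToLine (x v : σ → R) (p : MvPolynomial σ R) (t : R) :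
    (restrictToLine x v p).eval t = eval (x + t • v) p := by
  induction p using MvPolynomial.induction_on with
  | C a => simp [restrictToLine]
  | add f g hf hg => simp_all [restrictToLine]
  | mul_X f i hf => simp_all [restrictToLine, mul_comm t]

theorem derivative_restrictToLine [Fintype σ] (x v : σ → R) (p : MvPolynomial σ R) :
    Polynomial.derivative (restrictToLine x v p) =
      ∑ i, Polynomial.C (v i) * restrictToLine x v (pderiv i p) := by
  classical
  induction p using MvPolynomial.induction_on with
  | C a => simp [restrictToLine]
  | add f g hf hg => simp_all [restrictToLine, mul_add, Finset.sum_add_distrib]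
  | mul_X f i hf =>
    simp only [restrictToLine] at hf ⊢
    simp only [map_mul, map_add, aeval_X, Polynomial.derivative_mul, hf, Derivation.leibniz,
      pderiv_X, Pi.single_apply, smul_eq_mul, mul_ite, mul_one, mul_zero, apply_ite (aeval _),
      map_zero, mul_add, Finset.sum_add_distrib, Finset.sum_ite_eq, Finset.mem_univ, if_true,
      Finset.sum_mul, Polynomial.derivative_C, Polynomial.derivative_X]
    simp only [mul_left_comm (Polynomial.C (v _)) (Polynomial.C (x i) + _), ← Finset.mul_sum,
      ← Finset.sum_mul]
    ring

noncomputable def hessian (x : σ → R) (p : MvPolynomial σ R) : Matrix σ σ R :=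
  Matrix.of fun i j => eval x (pderiv i (pderiv j p))

theorem eval_zero_iterate_derivative_two_restrictToLine [Fintype σ] (x v : σ → R)
    (p : MvPolynomial σ R) :
    (Polynomial.derivative^[2] (restrictToLine x v p)).eval 0 = v ⬝ᵥ (hessian x p *ᵥ v) := by
  simp only [Function.iterate_succ, Function.iterate_zero, Function.comp_apply, id,
    derivative_restrictToLine, Polynomial.derivative_sum, Polynomial.derivative_mul,
    Polynomial.derivative_C, zero_mul, zero_add, Finset.mul_sum, Polynomial.eval_finsetSum,
    Polynomial.eval_mul, Polynomial.eval_C, eval_restrictToLine, zero_smul, add_zero]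
  simp only [dotProduct, Matrix.mulVec, hessian, Matrix.of_apply, Finset.mul_sum]
  rw [Finset.sum_comm]
  refine Finset.sum_congr rfl fun i _ => Finset.sum_congr rfl fun j _ => ?_
  ring

theorem eval_add_smul_eq_of_infinite [IsDomain R] {p : MvPolynomial σ R} {x v : σ → R} {c : R}
    (h : {t : R | eval (x + t • v) p = c}.Infinite) (t : R) : eval (x + t • v) p = c := by
  have hq : restrictToLine x v p = Polynomial.C c :=
    Polynomial.eq_of_infinite_eval_eq _ _ (by simpa only [eval_restrictToLine, Polynomial.eval_C])
  rw [← eval_restrictToLine, hq, Polynomial.eval_C]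

theorem tendsto_eval_add_smul_atTop [Fintype σ] {p : MvPolynomial σ ℝ}
    (hp : ConvexOn ℝ univ fun x => eval x p) {x v : σ → ℝ} (hH : (hessian x p).PosDef)
    (hv : v ≠ 0) : Tendsto (fun t : ℝ => eval (x + t • v) p) atTop atTop := by
  have hq : (fun t => (restrictToLine x v p).eval t) = fun t => eval (x + t • v) p :=
    _root_.funext (eval_restrictToLine x v p)
  rw [← hq]
  refine Polynomial.tendsto_atTop_of_convexOn (hq ▸ hp.comp_add_smul x v) ?_
  by_contra! hdeg
  have hpos := hH.dotProduct_mulVec_pos hv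
  rw [star_trivial, ← eval_zero_iterate_derivative_two_restrictToLine,
    Polynomial.iterate_derivative_eq_zero_of_degree_lt (hdeg.trans_lt (by norm_num)),
    Polynomial.eval_zero] at hpos
  exact hpos.false

end MvPolynomial

/-- If a convex polynomial `p : ℝⁿ → ℝ` has positive definite Hessian at some point `x₀`,
then `p` has a unique global minimizer. -/
theorem stmt2 (n : ℕ) (p : MvPolynomial (Fin n) ℝ)
    (hconv : ConvexOn ℝ Set.univ (fun x : Fin n → ℝ => eval x p))
    (x₀ : Fin n → ℝ)
    (hhess : (Matrix.of fun i j : Fin n =>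
        eval x₀ (pderiv i (pderiv j p))).PosDef) :
    ∃! xstar : Fin n → ℝ, ∀ x : Fin n → ℝ, eval xstar p ≤ eval x p := by
  have hray : ∀ v ≠ 0, Tendsto (fun t : ℝ => eval (x₀ + t • v) p) atTop atTop :=
    fun v hv => tendsto_eval_add_smul_atTop hconv hhess hv
  obtain ⟨xs, hxs⟩ := hconv.exists_forall_le_of_tendsto_atTop_add_smul (continuous_eval p) x₀ hray
  refine ⟨xs, hxs, fun y hy => ?_⟩
  by_contra hne
  have hline : ∀ t : ℝ, eval (xs + t • (y - xs)) p = eval xs p :=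
    eval_add_smul_eq_of_infinite ((Icc_infinite zero_lt_one).mono fun t ht =>
      hconv.apply_add_smul_sub_eq_of_forall_le hxs hy ht)
  have hray_xs := hconv.tendsto_atTop_add_smul_of_tendsto_atTop_add_smul
    (hray _ (sub_ne_zero.2 hne)) xs
  simp only [hline] at hray_xs
  exact not_tendsto_const_atTop _ _ hray_xs
end

section
/- If a polynomial p : ℝⁿ → ℝ is convex, is a polynomial function, and is coercive, then it has exactly one minimizer; equivalently, a convex polynomial cannot have two distinct minimizers unless it is constant along the line through them, contradicting coercivity. -/
open MvPolynomial

/-- A convex, coercive polynomial `p : ℝⁿ → ℝ` has exactly one (global) minimizer. -/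
theorem stmt4 (n : ℕ) (p : MvPolynomial (Fin n) ℝ)
    (hconv : ConvexOn ℝ Set.univ (fun x : Fin n → ℝ => eval x p))
    (hcoercive : Filter.Tendsto (fun x : Fin n → ℝ => eval x p)
        (Filter.cocompact (Fin n → ℝ)) Filter.atTop) :
    ∃! xstar : Fin n → ℝ, ∀ x : Fin n → ℝ, eval xstar p ≤ eval x p := by
  have hcont : Continuous (fun x : Fin n → ℝ => eval x p) := by continuity
  obtain ⟨x, hx⟩ := hcont.exists_forall_le hcoercive
  refine ⟨x, hx, ?_⟩
  intro y hy
  by_contra hne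
  -- the two minimum values coincide
  have hm : eval y p = eval x p := le_antisymm (hy x) (hx y)
  set m := eval x p with hmdef
  -- line through x and y (note: y is the "first" minimizer in the uniqueness goal)
  set L : ℝ → (Fin n → ℝ) := fun t => fun i => x i + (y i - x i) * t with hL
  -- p is constant on the segment
  have hseg : ∀ t : ℝ, t ∈ Set.Icc (0:ℝ) 1 → eval (L t) p = m := by
    intro t ht
    have h1 : L t = (1 - t) • x + t • y := by
      funext i; simp [hL, Pi.add_apply, Pi.smul_apply, smul_eq_mul]; ring
    have := hconv.2 (Set.mem_univ x) (Set.mem_univ y) (by linarith [ht.2]) ht.1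
      (by ring : (1 - t) + t = 1)
    rw [← h1] at this
    have h2 : (1 - t) * eval x p + t * eval y p = m := by rw [hm, ← hmdef]; ring
    exact le_antisymm (by simpa [h2] using this) (hx _)
  -- the univariate polynomial along the line
  set q : Polynomial ℝ :=
    eval₂ Polynomial.C (fun i => Polynomial.C (x i) + Polynomial.C (y i - x i) * Polynomial.X) p
    with hq
  have heval : ∀ t : ℝ, Polynomial.eval t q = eval (L t) p := by
    intro t
    rw [hq, polynomial_eval_eval₂]
    have h1 : ((Polynomial.evalRingHom t).comp Polynomial.C) = RingHom.id ℝ := by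
      ext r; simp
    have h2 : (fun i => Polynomial.eval t
        (Polynomial.C (x i) + Polynomial.C (y i - x i) * Polynomial.X)) = L t := by
      funext i; simp [hL]
    rw [h1, h2]
    rfl
  -- q - C m has infinitely many roots, so q is constant
  have hconst : q = Polynomial.C m := by
    have h0 : q - Polynomial.C m = 0 := by
      by_contra h
      have : {t : ℝ | (q - Polynomial.C m).IsRoot t}.Finite :=
        Polynomial.finite_setOf_isRoot h
      have hsub : Set.Icc (0:ℝ) 1 ⊆ {t : ℝ | (q - Polynomial.C m).IsRoot t} := by
        intro t ht
        simp [Polynomial.IsRoot, heval t, hseg t ht]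
      exact (Set.Icc_infinite (by norm_num : (0:ℝ) < 1)) (this.subset hsub)
    linear_combination (norm := ring_nf) h0
  -- but then p is constant along the whole line, contradicting coercivity
  have hxy : x ≠ y := fun h => hne h.symm
  have hnorm : (0:ℝ) < ‖y - x‖ := by
    rw [norm_pos_iff, sub_ne_zero]; exact fun h => hne h
  have hline : Filter.Tendsto L Filter.atTop (Filter.cocompact (Fin n → ℝ)) := by
    rw [← Metric.cobounded_eq_cocompact, ← tendsto_norm_atTop_iff_cobounded]
    have hLeq : ∀ t : ℝ, L t = x + t • (y - x) := by
      intro t; funext i; simp [hL, smul_eq_mul]; ring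
    have hge : ∀ t : ℝ, t * ‖y - x‖ - ‖x‖ ≤ ‖L t‖ := by
      intro t
      rcases le_or_gt t 0 with ht | ht
      · have : t * ‖y - x‖ - ‖x‖ ≤ 0 := by nlinarith [norm_nonneg x]
        exact this.trans (norm_nonneg _)
      · calc t * ‖y - x‖ - ‖x‖ = ‖t • (y - x)‖ - ‖x‖ := by
              rw [norm_smul, Real.norm_eq_abs, abs_of_pos ht]
          _ ≤ ‖x + t • (y - x)‖ := by
              have h3 : ‖t • (y - x)‖ = ‖(x + t • (y - x)) - x‖ := by
                rw [add_sub_cancel_left]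
              have h4 := norm_sub_le (x + t • (y - x)) x
              linarith [h3 ▸ h4]
          _ = ‖L t‖ := by rw [hLeq]
    exact Filter.tendsto_atTop_mono hge
      (Filter.tendsto_atTop_add_const_right _ _
        (Filter.Tendsto.atTop_mul_const hnorm Filter.tendsto_id))
  have := hcoercive.comp hline
  have habs : Filter.Tendsto (fun _ : ℝ => m) Filter.atTop Filter.atTop := by
    have hfun : (fun t : ℝ => eval (L t) p) = fun _ => m := by
      funext t
      rw [← heval t, hconst, Polynomial.eval_C]
    rwa [show ((fun x : Fin n → ℝ => eval x p) ∘ L) = fun t => eval (L t) p from rfl,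
      hfun] at this
  exact absurd (habs.eventually_ge_atTop (m + 1)).exists
    (by simp)
end

section
/- For every n ≥ 1 and d ≥ 1, there exist a scalar α > 0 and a positive definite symmetric matrix Q (indexed by monomials of degree at most d in n variables) such that 1 + α(xᵀx)^d = φ_d(x)ᵀ Q φ_d(x) for all x ∈ ℝⁿ, where φ_d(x) is the vector of all monomials in x of degree at most d. -/
/-!
Write `t = ∑ xᵢ²` and `xᵐ` for the monomial with exponent `m`. By the multinomial theorem,
`∑_{|m| = k} multinomial(m) (xᵐ)² = tᵏ`, so the positive definite diagonal matrix `D` of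
multinomial coefficients has Gram form `φ_dᵀ D φ_d = ∑_{k ≤ d} tᵏ`. Next,
`∑_{k ≤ d} (tᵏ - 1)(t^(d-k) - 1) = (d + 1)(1 + tᵈ) - 2 ∑_{k ≤ d} tᵏ`, and by the geometric sum
each `(tᵏ - 1)(tˡ - 1)` is a sum of terms `t^(a+b) (t - 1)²` with `a < k`, `b < l`.
Finally `tʲ (t - 1)² = ∑_{|m| = j} multinomial(m) (xᵐ (t - 1))²` for `j + 2 ≤ d` is a sum of
squares of polynomials of degree `≤ d`, i.e. a Gram form with a positive semidefinite matrix.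
Altogether `(d + 1)(1 + tᵈ) = φ_dᵀ (2D + S) φ_d` with `S ⪰ 0`, so `α = 1` and
`Q = (2D + S) / (d + 1)` work.
-/

open Finset Matrix MvPolynomial

noncomputable section

namespace SOSGram

abbrev Exponent (n d : ℕ) := {m : Fin n → Fin (d + 1) // (∑ i, (m i : ℕ)) ≤ d}

variable {n d : ℕ}

namespace Exponent

def deg (m : Exponent n d) : ℕ := ∑ i, (m.1 i : ℕ)

def ofFun (f : Fin n → ℕ) (hf : ∑ i, f i ≤ d) : Exponent n d :=
  ⟨fun i => ⟨f i, Nat.lt_succ_of_le ((single_le_sum (fun j _ => Nat.zero_le (f j))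
    (mem_univ i)).trans hf)⟩, hf⟩

@[simp]
lemma val_ofFun (f : Fin n → ℕ) (hf : ∑ i, f i ≤ d) (i : Fin n) :
    ((ofFun f hf).1 i : ℕ) = f i := rfl

lemma ext_val {m m' : Exponent n d} (h : ∀ i, (m.1 i : ℕ) = m'.1 i) : m = m' :=
  Subtype.ext (funext fun i => Fin.ext (h i))

def toFinsupp (m : Exponent n d) : Fin n →₀ ℕ :=
  Finsupp.equivFunOnFinite.symm fun i => m.1 i

lemma toFinsupp_injective : Function.Injective (toFinsupp : Exponent n d → Fin n →₀ ℕ) :=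
  fun _ _ h => ext_val fun i => DFunLike.congr_fun h i

def multinomial (m : Exponent n d) : ℕ := Nat.multinomial univ fun i => (m.1 i : ℕ)

lemma multinomial_pos (m : Exponent n d) : 0 < m.multinomial := Nat.multinomial_pos _ _

end Exponent

section Monomials

variable {R : Type*} [CommSemiring R]

def monomialVec (d : ℕ) (x : Fin n → R) : Exponent n d → R :=
  fun m => ∏ i, x i ^ (m.1 i : ℕ)

theorem sum_pow_eq_sum_exponent (y : Fin n → R) {k : ℕ} (hk : k ≤ d) :
    (∑ i, y i) ^ k =
      ∑ m : Exponent n d with m.deg = k, (m.multinomial : R) * monomialVec d y m := by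
  rw [sum_pow_eq_sum_piAntidiag]
  symm
  refine sum_bij (fun m _ i => m.1 i) (fun m hm => ?_) (fun _ _ _ _ h => ?_) (fun f hf => ?_)
    (fun m _ => rfl)
  · simpa [mem_piAntidiag, Exponent.deg] using (mem_filter.mp hm).2
  · exact Exponent.ext_val (congr_fun h)
  · have hf : ∑ i, f i = k := by simpa [mem_piAntidiag] using hf
    exact ⟨.ofFun f (hf ▸ hk), mem_filter.mpr ⟨mem_univ _, by simpa [Exponent.deg] using hf⟩,
      rfl⟩

theorem sum_exponent_deg_eq_mul_sq (x : Fin n → R) {k : ℕ} (hk : k ≤ d) :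
    ∑ m : Exponent n d with m.deg = k, (m.multinomial : R) * monomialVec d x m ^ 2 =
      (∑ i, x i ^ 2) ^ k := by
  rw [sum_pow_eq_sum_exponent _ hk]
  refine sum_congr rfl fun m _ => ?_
  simp only [monomialVec, ← prod_pow, ← pow_mul, mul_comm]

theorem sum_multinomial_mul_sq (x : Fin n → R) :
    ∑ m : Exponent n d, (m.multinomial : R) * monomialVec d x m ^ 2 =
      ∑ k ∈ range (d + 1), (∑ i, x i ^ 2) ^ k := by
  rw [← sum_fiberwise_of_maps_to (g := Exponent.deg) (t := range (d + 1))
    (fun m _ => mem_range_succ_iff.mpr m.2)]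
  exact sum_congr rfl fun k hk => sum_exponent_deg_eq_mul_sq x (mem_range_succ_iff.mp hk)

def coeffVec (p : MvPolynomial (Fin n) R) : Exponent n d → R :=
  fun m => p.coeff m.toFinsupp

theorem coeffVec_dotProduct_monomialVec {p : MvPolynomial (Fin n) R} (hp : p.totalDegree ≤ d)
    (x : Fin n → R) : coeffVec p ⬝ᵥ monomialVec d x = eval x p := by
  rw [eval_eq']
  refine sum_bij_ne_zero (fun m _ _ => m.toFinsupp) (fun m _ hm => ?_)
    (fun _ _ _ _ _ _ h => Exponent.toFinsupp_injective h) (fun s hs hne => ?_) (fun _ _ _ => rfl)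
  · exact mem_support_iff.mpr (left_ne_zero_of_mul hm)
  · have hs' : ∑ i, s i ≤ d := by
      simpa [Finsupp.sum_fintype] using (le_totalDegree hs).trans hp
    have he : (Exponent.ofFun s hs').toFinsupp = s := by ext i; rfl
    exact ⟨.ofFun s hs', mem_univ _, by simpa [coeffVec, monomialVec, he] using hne, he⟩

end Monomials

section Gram

variable {ι R : Type*} [Fintype ι] [CommSemiring R]

theorem sum_sum_mul_mul_eq_dotProduct_mulVec (v : ι → R) (Q : Matrix ι ι R) :
    ∑ i, ∑ j, v i * Q i j * v j = v ⬝ᵥ Q *ᵥ v := by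
  simp only [dotProduct, mulVec, mul_sum, mul_assoc]

theorem dotProduct_diagonal_mulVec_self [DecidableEq ι] (w v : ι → R) :
    v ⬝ᵥ diagonal w *ᵥ v = ∑ i, w i * v i ^ 2 := by
  simp only [dotProduct, mulVec_diagonal]
  exact sum_congr rfl fun i _ => by ring

theorem dotProduct_vecMulVec_self_mulVec (u v : ι → R) :
    v ⬝ᵥ vecMulVec u u *ᵥ v = (u ⬝ᵥ v) ^ 2 := by
  rw [vecMulVec_mulVec, op_smul_eq_smul, dotProduct_smul, smul_eq_mul, dotProduct_comm, sq]

end Gram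

theorem pow_sub_one_mul_pow_sub_one {R : Type*} [CommRing R] (t : R) (k l : ℕ) :
    (t ^ k - 1) * (t ^ l - 1) = (∑ a ∈ range k, ∑ b ∈ range l, t ^ (a + b)) * (t - 1) ^ 2 := by
  simp only [← geom_sum_mul, pow_add, ← sum_mul_sum]
  ring

theorem sum_range_pow_sub_one_mul_pow_sub_one {R : Type*} [CommRing R] (t : R) (d : ℕ) :
    ∑ k ∈ range (d + 1), (t ^ k - 1) * (t ^ (d - k) - 1) =
      (d + 1) * (1 + t ^ d) - 2 * ∑ k ∈ range (d + 1), t ^ k := by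
  have hexpand : ∀ k ∈ range (d + 1),
      (t ^ k - 1) * (t ^ (d - k) - 1) = (1 + t ^ d) - t ^ k - t ^ (d - k) := fun k hk => by
    linear_combination pow_mul_pow_sub t (mem_range_succ_iff.mp hk)
  have hreflect : ∑ k ∈ range (d + 1), t ^ (d - k) = ∑ k ∈ range (d + 1), t ^ k :=
    sum_range_reflect (t ^ ·) (d + 1)
  rw [sum_congr rfl hexpand, sum_sub_distrib, sum_sub_distrib, hreflect, sum_const, card_range,
    nsmul_eq_mul, Nat.cast_succ]
  ring

def monomialMulSqNormSubOne (m : Exponent n d) : MvPolynomial (Fin n) ℝ :=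
  (∏ i, X i ^ (m.1 i : ℕ)) * (∑ i, X i ^ 2 - 1)

theorem totalDegree_monomialMulSqNormSubOne_le (m : Exponent n d) :
    (monomialMulSqNormSubOne m).totalDegree ≤ m.deg + 2 := by
  refine (totalDegree_mul _ _).trans (add_le_add ?_ ?_)
  · exact (totalDegree_finsetProd _ _).trans (by simp [Exponent.deg])
  · refine (totalDegree_sub _ _).trans (max_le ((totalDegree_finsetSum _ _).trans ?_) (by simp))
    exact Finset.sup_le fun i _ => by simp

def sosMatrix (j : ℕ) : Matrix (Exponent n d) (Exponent n d) ℝ :=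
  ∑ m : Exponent n d with m.deg = j, (m.multinomial : ℝ) •
    vecMulVec (coeffVec (monomialMulSqNormSubOne m)) (coeffVec (monomialMulSqNormSubOne m))

theorem posSemidef_sosMatrix (j : ℕ) : (sosMatrix (n := n) (d := d) j).PosSemidef :=
  posSemidef_sum _ fun _ _ => (posSemidef_vecMulVec_self_star _).smul (Nat.cast_nonneg _)

theorem dotProduct_sosMatrix_mulVec {j : ℕ} (hj : j + 2 ≤ d) (x : Fin n → ℝ) :
    monomialVec d x ⬝ᵥ sosMatrix j *ᵥ monomialVec d x =
      (∑ i, x i ^ 2) ^ j * (∑ i, x i ^ 2 - 1) ^ 2 := by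
  rw [← sum_exponent_deg_eq_mul_sq x (d := d) (by omega), sum_mul, sosMatrix, sum_mulVec,
    dotProduct_sum]
  refine sum_congr rfl fun m hm => ?_
  have hdeg : (monomialMulSqNormSubOne m).totalDegree ≤ d :=
    (totalDegree_monomialMulSqNormSubOne_le m).trans ((mem_filter.mp hm).2 ▸ hj)
  rw [smul_mulVec, dotProduct_smul, dotProduct_vecMulVec_self_mulVec,
    coeffVec_dotProduct_monomialVec hdeg]
  simp only [monomialMulSqNormSubOne, monomialVec, eval_mul, eval_prod, eval_pow, eval_X,
    eval_sub, eval_sum, map_one, smul_eq_mul]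
  ring

def gramMatrix (n d : ℕ) : Matrix (Exponent n d) (Exponent n d) ℝ :=
  (2 : ℝ) • diagonal (fun m => (m.multinomial : ℝ)) +
    ∑ k ∈ range (d + 1), ∑ a ∈ range k, ∑ b ∈ range (d - k), sosMatrix (a + b)

theorem posDef_gramMatrix : (gramMatrix n d).PosDef :=
  ((posDef_diagonal_iff.mpr fun m => Nat.cast_pos.mpr m.multinomial_pos).smul
    two_pos).add_posSemidef
    (posSemidef_sum _ fun _ _ => posSemidef_sum _ fun _ _ => posSemidef_sum _ fun _ _ =>
      posSemidef_sosMatrix _)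

theorem dotProduct_gramMatrix_mulVec (x : Fin n → ℝ) :
    monomialVec d x ⬝ᵥ gramMatrix n d *ᵥ monomialVec d x =
      (d + 1) * (1 + (∑ i, x i ^ 2) ^ d) := by
  set t := ∑ i, x i ^ 2
  have hsos : ∀ k ∈ range (d + 1),
      ∑ a ∈ range k, ∑ b ∈ range (d - k),
        monomialVec d x ⬝ᵥ sosMatrix (a + b) *ᵥ monomialVec d x =
          (t ^ k - 1) * (t ^ (d - k) - 1) := by
    intro k hk
    rw [pow_sub_one_mul_pow_sub_one, sum_mul]
    refine sum_congr rfl fun a ha => ?_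
    rw [sum_mul]
    refine sum_congr rfl fun b hb => dotProduct_sosMatrix_mulVec ?_ x
    have := mem_range.mp ha; have := mem_range.mp hb; have := mem_range.mp hk
    omega
  rw [gramMatrix, add_mulVec, dotProduct_add, smul_mulVec, dotProduct_smul, smul_eq_mul,
    dotProduct_diagonal_mulVec_self, sum_multinomial_mul_sq]
  simp only [sum_mulVec, dotProduct_sum]
  rw [sum_congr rfl hsos, sum_range_pow_sub_one_mul_pow_sub_one]
  ring

end SOSGram

end

theorem stmt5_general (n d : ℕ) :
    ∃ α : ℝ, 0 < α ∧
    ∃ Q : Matrix {m : Fin n → Fin (d+1) // (∑ i, (m i : ℕ)) ≤ d}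
                 {m : Fin n → Fin (d+1) // (∑ i, (m i : ℕ)) ≤ d} ℝ,
      Q.PosDef ∧
      ∀ x : Fin n → ℝ,
        1 + α * (∑ i, (x i)^2) ^ d =
          ∑ m : {m : Fin n → Fin (d+1) // (∑ i, (m i : ℕ)) ≤ d},
          ∑ m' : {m : Fin n → Fin (d+1) // (∑ i, (m i : ℕ)) ≤ d},
            (∏ i, x i ^ ((m : Fin n → Fin (d+1)) i : ℕ)) * Q m m' *
              (∏ i, x i ^ ((m' : Fin n → Fin (d+1)) i : ℕ)) := by
  refine ⟨1, one_pos, ((d : ℝ) + 1)⁻¹ • SOSGram.gramMatrix n d,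
    SOSGram.posDef_gramMatrix.smul (by positivity), fun x => ?_⟩
  calc 1 + 1 * (∑ i, x i ^ 2) ^ d
      = ((d : ℝ) + 1)⁻¹ * (SOSGram.monomialVec d x ⬝ᵥ
          SOSGram.gramMatrix n d *ᵥ SOSGram.monomialVec d x) := by
        rw [SOSGram.dotProduct_gramMatrix_mulVec]
        field_simp
    _ = _ := by
        rw [← smul_eq_mul, ← dotProduct_smul, ← smul_mulVec,
          ← SOSGram.sum_sum_mul_mul_eq_dotProduct_mulVec]
        rfl

/-- For every `n ≥ 1` and `d ≥ 1`, there exist `α > 0` and a positive definite symmetric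
matrix `Q`, indexed by (exponent vectors of) monomials of degree at most `d` in `n`
variables, such that `1 + α (xᵀx)^d = φ_d(x)ᵀ Q φ_d(x)` for all `x ∈ ℝⁿ`, where `φ_d(x)`
is the vector of all monomials of degree at most `d`. -/
theorem stmt5 (n d : ℕ) (hn : 1 ≤ n) (hd : 1 ≤ d) :
    ∃ α : ℝ, 0 < α ∧
    ∃ Q : Matrix {m : Fin n → Fin (d+1) // (∑ i, (m i : ℕ)) ≤ d}
                 {m : Fin n → Fin (d+1) // (∑ i, (m i : ℕ)) ≤ d} ℝ,
      Q.PosDef ∧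
      ∀ x : Fin n → ℝ,
        1 + α * (∑ i, (x i)^2) ^ d =
          ∑ m : {m : Fin n → Fin (d+1) // (∑ i, (m i : ℕ)) ≤ d},
          ∑ m' : {m : Fin n → Fin (d+1) // (∑ i, (m i : ℕ)) ≤ d},
            (∏ i, x i ^ ((m : Fin n → Fin (d+1)) i : ℕ)) * Q m m' *
              (∏ i, x i ^ ((m' : Fin n → Fin (d+1)) i : ℕ)) :=
  stmt5_general n d
end

section
/- Let f : ℝ → ℝ be three times differentiable at x₀ with f″(x₀) > 0 and f‴(x₀) ≠ 0, let T(x) be the third-order Taylor polynomial of f at x₀, and let t* = (f‴(x₀))²/(48 f″(x₀)). Then t* is the smallest t ≥ 0 such that ψ(x) = T(x) + t(x − x₀)⁴ is convex on ℝ, and the unique critical point of ψ with t = t* is x₁ = x₀ − 2 f″(x₀)/f‴(x₀) − cbrt( (f′(x₀) − (2/3)(f″(x₀))²/f‴(x₀)) / ((f‴(x₀))²/(12 f″(x₀))) ). -/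
/-!
With `y = x - x₀`, `ψ_t'' = f″(x₀) + f‴(x₀) y + 12 t y²`, a quadratic in `y`, so `ψ_t` is convex
exactly when its discriminant `f‴(x₀)² - 48 t f″(x₀)` is nonpositive; this gives `t*`. At `t = t*`
the quadratic `ψ_t''` is the perfect square `(2 f″(x₀) + f‴(x₀) y)² / (4 f″(x₀))`, so `ψ_t'` is a
shifted cube `(f‴(x₀)² / (12 f″(x₀))) ((y + 2 f″(x₀)/f‴(x₀))³ + K)`, with `K` the argument of `cbrt`
in `x₁`, and vanishes exactly at `x₁`.
-/

/-- The real cube root of a real number. -/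
noncomputable def realCbrt (y : ℝ) : ℝ :=
  if 0 ≤ y then y ^ ((1:ℝ)/3) else -((-y) ^ ((1:ℝ)/3))

open Set

lemma realCbrt_pow_three (y : ℝ) : realCbrt y ^ 3 = y := by
  unfold realCbrt
  split_ifs with hy
  · rw [← Real.rpow_natCast, ← Real.rpow_mul hy]
    norm_num
  · rw [neg_pow, ← Real.rpow_natCast ((-y) ^ ((1:ℝ)/3)), ← Real.rpow_mul (by linarith)]
    norm_num

lemma pow_three_eq_iff_eq_realCbrt {w y : ℝ} : w ^ 3 = y ↔ w = realCbrt y := by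
  rw [← (Odd.pow_inj (by decide : Odd 3) : w ^ 3 = realCbrt y ^ 3 ↔ _), realCbrt_pow_three]

theorem convexOn_univ_iff_of_hasDerivAt {f f' f'' : ℝ → ℝ}
    (hf : ∀ x, HasDerivAt f (f' x) x) (hf' : ∀ x, HasDerivAt f' (f'' x) x) :
    ConvexOn ℝ univ f ↔ ∀ x, 0 ≤ f'' x := by
  have hderiv : deriv f = f' := funext fun x => (hf x).deriv
  have hderiv2 : deriv f' = f'' := funext fun x => (hf' x).deriv
  constructor
  · intro hconv x
    have hmono : Monotone f' := by
      simpa [hderiv] using hconv.monotoneOn_deriv fun x _ => (hf x).differentiableAt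
    simpa [hderiv2] using hmono.deriv_nonneg (x := x)
  · intro hnonneg
    refine convexOn_univ_of_deriv2_nonneg (fun x => (hf x).differentiableAt) ?_ ?_
    · rw [hderiv]
      exact fun x => (hf' x).differentiableAt
    · simpa [hderiv, hderiv2] using hnonneg

/-- `taylorQuartic a b c d t x₀` is `ψ_t` for the Taylor coefficients `a, b, c, d` of `f` at `x₀`. -/
noncomputable def taylorQuartic (a b c d t x₀ x : ℝ) : ℝ :=
  a + b * (x - x₀) + (1/2) * c * (x - x₀)^2 + (1/6) * d * (x - x₀)^3 + t * (x - x₀)^4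

section taylorQuartic

variable {a b c d t x₀ : ℝ}

lemma hasDerivAt_taylorQuartic (x : ℝ) :
    HasDerivAt (taylorQuartic a b c d t x₀)
      (b + c * (x - x₀) + (1/2) * d * (x - x₀)^2 + 4 * t * (x - x₀)^3) x := by
  have hy : HasDerivAt (fun x : ℝ => x - x₀) 1 x := (hasDerivAt_id x).sub_const x₀
  exact ((((hasDerivAt_const x a).add (hy.const_mul b)).add
      ((hy.pow 2).const_mul (1/2 * c))).add ((hy.pow 3).const_mul (1/6 * d))).add
      ((hy.pow 4).const_mul t) |>.congr_deriv (by norm_num; ring)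

lemma hasDerivAt_deriv_taylorQuartic (x : ℝ) :
    HasDerivAt (fun x => b + c * (x - x₀) + (1/2) * d * (x - x₀)^2 + 4 * t * (x - x₀)^3)
      (c + d * (x - x₀) + 12 * t * (x - x₀)^2) x := by
  have hy : HasDerivAt (fun x : ℝ => x - x₀) 1 x := (hasDerivAt_id x).sub_const x₀
  exact (((hasDerivAt_const x b).add (hy.const_mul c)).add
      ((hy.pow 2).const_mul (1/2 * d))).add ((hy.pow 3).const_mul (4 * t))
      |>.congr_deriv (by norm_num; ring)

theorem convexOn_taylorQuartic_iff (hc : 0 < c) :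
    ConvexOn ℝ univ (taylorQuartic a b c d t x₀) ↔ d^2 ≤ 48 * t * c := by
  rw [convexOn_univ_iff_of_hasDerivAt hasDerivAt_taylorQuartic hasDerivAt_deriv_taylorQuartic]
  constructor
  · intro hnonneg
    have hdiscr := discrim_le_zero (a := 12 * t) (b := d) (c := c) fun y => by
      simpa using hnonneg (y + x₀) |>.trans_eq (by ring)
    rw [discrim] at hdiscr
    linarith
  · intro hd x
    -- `4c (c + d y + 12 t y²) ≥ (2c + d y)²` once `d² ≤ 48 t c`
    nlinarith [sq_nonneg (2 * c + d * (x - x₀)), sq_nonneg (x - x₀)]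

theorem isLeast_convexOn_taylorQuartic (hc : 0 < c) :
    IsLeast {t | 0 ≤ t ∧ ConvexOn ℝ univ (taylorQuartic a b c d t x₀)} (d^2 / (48 * c)) := by
  refine ⟨⟨by positivity, (convexOn_taylorQuartic_iff hc).2 ?_⟩, fun t ⟨_, hconv⟩ => ?_⟩
  · exact le_of_eq (by field_simp)
  · rw [div_le_iff₀ (by positivity)]
    linarith [(convexOn_taylorQuartic_iff hc).1 hconv]

theorem deriv_taylorQuartic_eq_zero_iff (hc : c ≠ 0) (hd : d ≠ 0) (x : ℝ) :
    deriv (taylorQuartic a b c d (d^2 / (48 * c)) x₀) x = 0 ↔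
      x = x₀ - 2 * c / d - realCbrt ((b - (2/3) * c^2 / d) / (d^2 / (12 * c))) := by
  set K := (b - (2/3) * c^2 / d) / (d^2 / (12 * c)) with hK
  have hcube : deriv (taylorQuartic a b c d (d^2 / (48 * c)) x₀) x =
      d^2 / (12 * c) * (K - (-(x - x₀ + 2 * c / d))^3) := by
    rw [(hasDerivAt_taylorQuartic x).deriv, hK]
    field_simp
    ring
  have hlead : d^2 / (12 * c) ≠ 0 := by positivity
  rw [hcube, mul_eq_zero, or_iff_right hlead, sub_eq_zero, eq_comm, pow_three_eq_iff_eq_realCbrt]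
  constructor <;> intro h <;> linarith

end taylorQuartic

theorem stmt9_general (f : ℝ → ℝ) (x₀ : ℝ)
    (h2 : 0 < iteratedDeriv 2 f x₀) (h3 : iteratedDeriv 3 f x₀ ≠ 0) :
    IsLeast {t : ℝ | 0 ≤ t ∧ ConvexOn ℝ Set.univ (fun x : ℝ =>
        (f x₀ + deriv f x₀ * (x - x₀) + (1/2) * iteratedDeriv 2 f x₀ * (x - x₀)^2
          + (1/6) * iteratedDeriv 3 f x₀ * (x - x₀)^3) + t * (x - x₀)^4)}
      ((iteratedDeriv 3 f x₀)^2 / (48 * iteratedDeriv 2 f x₀)) ∧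
    ∀ x : ℝ,
      deriv (fun x : ℝ =>
        (f x₀ + deriv f x₀ * (x - x₀) + (1/2) * iteratedDeriv 2 f x₀ * (x - x₀)^2
          + (1/6) * iteratedDeriv 3 f x₀ * (x - x₀)^3)
          + ((iteratedDeriv 3 f x₀)^2 / (48 * iteratedDeriv 2 f x₀)) * (x - x₀)^4) x = 0
      ↔ x = x₀ - 2 * iteratedDeriv 2 f x₀ / iteratedDeriv 3 f x₀ -
          realCbrt ((deriv f x₀ - (2/3) * (iteratedDeriv 2 f x₀)^2 / iteratedDeriv 3 f x₀) /
            ((iteratedDeriv 3 f x₀)^2 / (12 * iteratedDeriv 2 f x₀))) :=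
  ⟨isLeast_convexOn_taylorQuartic h2, deriv_taylorQuartic_eq_zero_iff h2.ne' h3⟩

/-- Let `f` be three times differentiable at `x₀` with `f″(x₀) > 0` and `f‴(x₀) ≠ 0`,
let `T` be the third-order Taylor polynomial of `f` at `x₀`, and let
`t* = f‴(x₀)²/(48 f″(x₀))`. Then `t*` is the smallest `t ≥ 0` such that
`ψ_t(x) = T(x) + t(x−x₀)⁴` is convex, and the unique critical point of `ψ_{t*}` is
`x₁ = x₀ − 2f″(x₀)/f‴(x₀) − cbrt((f′(x₀) − (2/3)f″(x₀)²/f‴(x₀)) / (f‴(x₀)²/(12 f″(x₀))))`. -/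
theorem stmt9 (f : ℝ → ℝ) (x₀ : ℝ) (hf : ContDiffAt ℝ 3 f x₀)
    (h2 : 0 < iteratedDeriv 2 f x₀) (h3 : iteratedDeriv 3 f x₀ ≠ 0) :
    IsLeast {t : ℝ | 0 ≤ t ∧ ConvexOn ℝ Set.univ (fun x : ℝ =>
        (f x₀ + deriv f x₀ * (x - x₀) + (1/2) * iteratedDeriv 2 f x₀ * (x - x₀)^2
          + (1/6) * iteratedDeriv 3 f x₀ * (x - x₀)^3) + t * (x - x₀)^4)}
      ((iteratedDeriv 3 f x₀)^2 / (48 * iteratedDeriv 2 f x₀)) ∧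
    ∀ x : ℝ,
      deriv (fun x : ℝ =>
        (f x₀ + deriv f x₀ * (x - x₀) + (1/2) * iteratedDeriv 2 f x₀ * (x - x₀)^2
          + (1/6) * iteratedDeriv 3 f x₀ * (x - x₀)^3)
          + ((iteratedDeriv 3 f x₀)^2 / (48 * iteratedDeriv 2 f x₀)) * (x - x₀)^4) x = 0
      ↔ x = x₀ - 2 * iteratedDeriv 2 f x₀ / iteratedDeriv 3 f x₀ -
          realCbrt ((deriv f x₀ - (2/3) * (iteratedDeriv 2 f x₀)^2 / iteratedDeriv 3 f x₀) /
            ((iteratedDeriv 3 f x₀)^2 / (12 * iteratedDeriv 2 f x₀))) :=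
  stmt9_general f x₀ h2 h3
end

section
/- A conic combination of sos-convex polynomials is sos-convex: if p and q are sos-convex and a, b ≥ 0, then a·p + b·q is sos-convex. Moreover, the polynomial ‖x − x₀‖^{2m} (for any m ≥ 1 and x₀ ∈ ℝⁿ) is sos-convex. -/
open MvPolynomial

/-- A polynomial is a sum of squares if it is a finite sum of squares of polynomials. -/
def IsSOS {σ : Type*} (p : MvPolynomial σ ℝ) : Prop :=
  ∃ (k : ℕ) (q : Fin k → MvPolynomial σ ℝ), p = ∑ i, (q i) ^ 2

/-- The polynomial `(x,y) ↦ yᵀ ∇²p(x) y` in the `2n` variables `(x,y)`. -/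
noncomputable def hessForm {n : ℕ} (p : MvPolynomial (Fin n) ℝ) :
    MvPolynomial (Fin n ⊕ Fin n) ℝ :=
  ∑ i : Fin n, ∑ j : Fin n,
    X (Sum.inr i) * rename Sum.inl (pderiv i (pderiv j p)) * X (Sum.inr j)

/-- A polynomial `p` is sos-convex if `(x,y) ↦ yᵀ∇²p(x)y` is a sum of squares. -/
def IsSOSConvex {n : ℕ} (p : MvPolynomial (Fin n) ℝ) : Prop :=
  IsSOS (hessForm p)

lemma sos_sq {σ : Type*} (p : MvPolynomial σ ℝ) : IsSOS (p^2) :=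
  ⟨1, fun _ => p, by simp⟩

lemma sos_add {σ : Type*} {p q : MvPolynomial σ ℝ} (hp : IsSOS p) (hq : IsSOS q) :
    IsSOS (p + q) := by
  obtain ⟨k, f, rfl⟩ := hp
  obtain ⟨l, g, rfl⟩ := hq
  refine ⟨k + l, Fin.append f g, ?_⟩
  rw [Fin.sum_univ_add]
  simp [Fin.append_left, Fin.append_right]

lemma sos_mul {σ : Type*} {p q : MvPolynomial σ ℝ} (hp : IsSOS p) (hq : IsSOS q) :
    IsSOS (p * q) := by
  obtain ⟨k, f, rfl⟩ := hp
  obtain ⟨l, g, rfl⟩ := hq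
  refine ⟨k * l, fun i => f (finProdFinEquiv.symm i).1 * g (finProdFinEquiv.symm i).2, ?_⟩
  rw [Finset.sum_mul_sum, ← finProdFinEquiv.sum_comp]
  rw [Fintype.sum_prod_type]
  simp [mul_pow]

lemma sos_C {a : ℝ} (ha : 0 ≤ a) {σ : Type*} : IsSOS (C a : MvPolynomial σ ℝ) :=
  ⟨1, fun _ => C (Real.sqrt a), by simp [← C_pow, Real.sq_sqrt ha, sq, ← C_mul, Real.mul_self_sqrt ha]⟩

lemma sos_pow {σ : Type*} {p : MvPolynomial σ ℝ} (hp : IsSOS p) (k : ℕ) : IsSOS (p ^ k) := by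
  induction k with
  | zero => simpa using sos_C (zero_le_one)
  | succ k ih => rw [pow_succ]; exact sos_mul ih hp

lemma hessForm_add {n : ℕ} (p q : MvPolynomial (Fin n) ℝ) :
    hessForm (p + q) = hessForm p + hessForm q := by
  simp [hessForm, map_add, mul_add, add_mul, Finset.sum_add_distrib]

lemma hessForm_C_mul {n : ℕ} (a : ℝ) (p : MvPolynomial (Fin n) ℝ) :
    hessForm (C a * p) = C a * hessForm p := by
  simp only [hessForm, Finset.mul_sum]
  congr 1; funext i; congr 1; funext j
  rw [pderiv_C_mul, pderiv_C_mul, map_mul, rename_C]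
  ring

variable {n : ℕ} (c : Fin n → ℝ)

noncomputable def rr : MvPolynomial (Fin n) ℝ := ∑ i, (X i - C (c i))^2

lemma pderiv_rr (j : Fin n) : pderiv j (rr c) = C 2 * (X j - C (c j)) := by
  rw [rr, map_sum]
  rw [Finset.sum_eq_single j]
  · rw [sq]
    simp only [Derivation.leibniz, pderiv_X_self, pderiv_C, smul_eq_mul, map_sub, pderiv_X]
    rw [show (C (2:ℝ) : MvPolynomial (Fin n) ℝ) = 2 from map_ofNat _ 2]
    ring
  · intro i _ hij
    simp [pderiv_X, Pi.single_apply, hij.symm, sq, Derivation.leibniz]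
  · simp

lemma pderiv_pderiv_rr_pow (k : ℕ) (i j : Fin n) :
    pderiv i (pderiv j (rr c ^ (k+1))) =
      ((k+1)*k) • (rr c ^ (k-1) * (C 4 * (X i - C (c i)) * (X j - C (c j))))
      + (k+1) • ((if i = j then 1 else 0) * (C 2 * rr c ^ k)) := by
  have hA : ∀ i j : Fin n, pderiv i (X j - C (c j)) =
      (if i = j then (1 : MvPolynomial (Fin n) ℝ) else 0) := by
    intro i j
    rcases eq_or_ne i j with rfl | h
    · simp
    · simp [pderiv_X, Pi.single_apply, Ne.symm h, if_neg h]
  have hpow : pderiv i (rr c ^ k) = k • (rr c ^ (k-1) * (C 2 * (X i - C (c i)))) := by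
    rw [Derivation.leibniz_pow, pderiv_rr, smul_eq_mul]
  rw [Derivation.leibniz_pow, Nat.add_sub_cancel, pderiv_rr, smul_eq_mul, map_nsmul,
    Derivation.leibniz, pderiv_C_mul, hA i j, hpow]
  simp only [smul_eq_mul, nsmul_eq_mul]
  push_cast
  split_ifs with h
  · subst h
    rw [show (C (4:ℝ) : MvPolynomial (Fin n) ℝ) = C 2 * C 2 by rw [← C_mul]; norm_num]
    ring
  · rw [show (C (4:ℝ) : MvPolynomial (Fin n) ℝ) = C 2 * C 2 by rw [← C_mul]; norm_num]
    ring

lemma hessForm_term (k : ℕ) (i j : Fin n) :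
    X (Sum.inr i) * rename Sum.inl (pderiv i (pderiv j (rr c ^ (k+1)))) * X (Sum.inr j)
      = C (((k+1)*k : ℕ):ℝ) * C 4 * (rename Sum.inl (rr c))^(k-1)
          * (X (Sum.inr i) * (X (Sum.inl i) - C (c i)))
          * (X (Sum.inr j) * (X (Sum.inl j) - C (c j)))
        + (if i = j then C (((k+1):ℕ):ℝ) * C 2 * (rename Sum.inl (rr c))^k
            * (X (Sum.inr i) * X (Sum.inr j)) else 0) := by
  rw [pderiv_pderiv_rr_pow]
  simp only [map_add, map_nsmul, map_mul, map_sub, map_pow, rename_C, rename_X,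
    apply_ite (rename Sum.inl), map_one, map_zero, nsmul_eq_mul, C_eq_coe_nat, map_natCast]
  push_cast
  split_ifs with h
  · ring
  · ring

lemma hessForm_rr_pow (k : ℕ) :
    hessForm (rr c ^ (k+1)) =
      C (((k+1)*k : ℕ):ℝ) * C 4 * (rename Sum.inl (rr c))^(k-1)
        * (∑ i : Fin n, X (Sum.inr i) * (X (Sum.inl i) - C (c i)))^2
      + C (((k+1):ℕ):ℝ) * C 2 * (rename Sum.inl (rr c))^k
        * (∑ i : Fin n, (X (Sum.inr i))^2) := by
  rw [hessForm]
  simp only [hessForm_term]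
  simp only [Finset.sum_add_distrib]
  congr 1
  · rw [sq, Finset.sum_mul_sum]
    simp only [Finset.mul_sum]
    exact Finset.sum_congr rfl fun i _ => Finset.sum_congr rfl fun j _ => by ring
  · simp only [Finset.sum_ite_eq, Finset.mem_univ, if_true]
    simp only [Finset.mul_sum]
    exact Finset.sum_congr rfl fun i _ => by ring

/-- A conic combination of sos-convex polynomials is sos-convex, and the polynomial
`‖x − x₀‖^{2m}` is sos-convex for every `m ≥ 1` and `x₀ ∈ ℝⁿ`. -/
theorem stmt18 (n : ℕ) :
    (∀ p q : MvPolynomial (Fin n) ℝ, ∀ a b : ℝ, 0 ≤ a → 0 ≤ b →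
      IsSOSConvex p → IsSOSConvex q → IsSOSConvex (C a * p + C b * q)) ∧
    (∀ m : ℕ, 1 ≤ m → ∀ x₀ : Fin n → ℝ,
      IsSOSConvex ((∑ i : Fin n, (X i - C (x₀ i))^2) ^ m)) := by
  constructor
  · intro p q a b ha hb hp hq
    unfold IsSOSConvex at *
    rw [hessForm_add, hessForm_C_mul, hessForm_C_mul]
    exact sos_add (sos_mul (sos_C ha) hp) (sos_mul (sos_C hb) hq)
  · intro m hm x₀
    obtain ⟨k, rfl⟩ : ∃ k, m = k + 1 := ⟨m - 1, (Nat.succ_pred_eq_of_pos hm).symm⟩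
    unfold IsSOSConvex
    have hr : (∑ i : Fin n, (X i - C (x₀ i))^2) = rr x₀ := rfl
    have hu : IsSOS (rename Sum.inl (rr x₀) : MvPolynomial (Fin n ⊕ Fin n) ℝ) := by
      refine ⟨n, fun i => X (Sum.inl i) - C (x₀ i), ?_⟩
      rw [rr, map_sum]
      simp [map_sub, rename_X, rename_C]
    have ht : IsSOS (∑ i : Fin n, (X (Sum.inr i) : MvPolynomial (Fin n ⊕ Fin n) ℝ)^2) :=
      ⟨n, fun i => X (Sum.inr i), rfl⟩
    rw [hr, hessForm_rr_pow]
    apply sos_add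
    · exact sos_mul (sos_mul (sos_mul (sos_C (by positivity)) (sos_C (by norm_num)))
        (sos_pow hu _)) (sos_sq _)
    · exact sos_mul (sos_mul (sos_mul (sos_C (by positivity)) (sos_C (by norm_num)))
        (sos_pow hu _)) ht
end
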